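/- arXiv:2604.08992 — 4 statements merged into one kernel-verified Lean document; each statement's English description precedes it below -/
import Mathlib

section
/- Let G be a connected graph embedded isometrically in a hypercube Q_k (a partial cube), with Θ-classes (edge cuts) F_1, …, F_k. If for each i, G − F_i has exactly two connected components with n_1^i and n_2^i vertices, then the Wiener index of G equals the sum over i of n_1^i · n_2^i. -/
/-!
Every edge of `G - Fᵢ` preserves coordinate `i`, so the `i`-th label is constant on the
components of `G - Fᵢ`. When there are exactly two components the two constants differ:
otherwise no edge of `G` would change coordinate `i`, `Fᵢ` would be empty and `G - Fᵢ = G`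
would be connected. Hence `ℓ u i ≠ ℓ v i` exactly when `u` and `v` lie in different
components, and summing the Hamming distance `d(u, v) = #{i | ℓ u i ≠ ℓ v i}` over ordered
pairs counts `2 n₁ⁱ n₂ⁱ` pairs for each coordinate `i`.
-/

open Finset

theorem forall_eq_or_eq_of_ne {α : Type*} {a b x y : α} (hall : ∀ c, c = a ∨ c = b)
    (hxy : x ≠ y) (c : α) : c = x ∨ c = y := by
  rcases hall x with rfl | rfl <;> rcases hall y with rfl | rfl <;>
    rcases hall c with rfl | rfl <;> simp_all

theorem card_filter_ne_eq_of_forall_eq_or_eq {V γ : Type*} [Fintype V] [DecidableEq γ]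
    {g : V → γ} {b₁ b₂ : γ} (hne : b₁ ≠ b₂) (hall : ∀ v, g v = b₁ ∨ g v = b₂) :
    #{p : V × V | g p.1 ≠ g p.2} = 2 * #{v | g v = b₁} * #{v | g v = b₂} := by
  set A : Finset V := {v | g v = b₁} with hA
  set B : Finset V := {v | g v = b₂} with hB
  have hdisj : Disjoint (A ×ˢ B) (B ×ˢ A) :=
    disjoint_left.2 fun p hp hq => by simp_all
  have hsplit : ({p : V × V | g p.1 ≠ g p.2} : Finset (V × V)) =
      (A ×ˢ B).disjUnion (B ×ˢ A) hdisj := by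
    ext ⟨u, v⟩
    rcases hall u with hu | hu <;> rcases hall v with hv | hv <;>
      simp [hA, hB, hu, hv, hne, hne.symm]
  rw [hsplit, card_disjUnion, card_product, card_product]
  ring

namespace SimpleGraph

variable {V β : Type*} {G : SimpleGraph V} {f : V → β}

def crossingEdges (G : SimpleGraph V) (f : V → β) : Set (Sym2 V) :=
  {e | ∃ u v : V, e = s(u, v) ∧ G.Adj u v ∧ f u ≠ f v}

theorem deleteEdges_crossingEdges_adj {u v : V} :
    (G.deleteEdges (G.crossingEdges f)).Adj u v ↔ G.Adj u v ∧ f u = f v := by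
  simp only [deleteEdges_adj, crossingEdges, Set.mem_ofPred_eq, Sym2.eq_iff]
  constructor
  · rintro ⟨hadj, hcross⟩
    exact ⟨hadj, not_not.1 fun hne => hcross ⟨u, v, Or.inl ⟨rfl, rfl⟩, hadj, hne⟩⟩
  · rintro ⟨hadj, heq⟩
    refine ⟨hadj, ?_⟩
    rintro ⟨a, b, ⟨rfl, rfl⟩ | ⟨rfl, rfl⟩, -, hne⟩
    exacts [hne heq, hne heq.symm]

theorem Reachable.eq_of_deleteEdges_crossingEdges {u v : V}
    (h : (G.deleteEdges (G.crossingEdges f)).Reachable u v) : f u = f v := by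
  obtain ⟨p⟩ := h
  induction p with
  | nil => rfl
  | cons hadj _ ih => exact (deleteEdges_crossingEdges_adj.1 hadj).2.trans ih

theorem eq_iff_connectedComponentMk_eq_of_forall_eq_or_eq (hG : G.Connected)
    {c₁ c₂ : (G.deleteEdges (G.crossingEdges f)).ConnectedComponent}
    (hall : ∀ c, c = c₁ ∨ c = c₂) (u v : V) :
    f u = f v ↔ (G.deleteEdges (G.crossingEdges f)).connectedComponentMk u =
      (G.deleteEdges (G.crossingEdges f)).connectedComponentMk v := by
  refine ⟨fun huv => ?_, fun h => (ConnectedComponent.exact h).eq_of_deleteEdges_crossingEdges⟩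
  by_contra hcomp
  have hconst : ∀ w, f w = f u := fun w => by
    rcases forall_eq_or_eq_of_ne hall hcomp
      ((G.deleteEdges (G.crossingEdges f)).connectedComponentMk w) with h | h
    · exact (ConnectedComponent.exact h).eq_of_deleteEdges_crossingEdges
    · exact (ConnectedComponent.exact h).eq_of_deleteEdges_crossingEdges.trans huv.symm
  have hle : G ≤ G.deleteEdges (G.crossingEdges f) := fun a b hab =>
    deleteEdges_crossingEdges_adj.2 ⟨hab, (hconst a).trans (hconst b).symm⟩
  exact hcomp (ConnectedComponent.sound ((hG.mono hle).preconnected u v))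

theorem card_filter_ne_eq_of_two_components [Fintype V] [DecidableEq β]
    (hG : G.Connected) {c₁ c₂ : (G.deleteEdges (G.crossingEdges f)).ConnectedComponent}
    (hne : c₁ ≠ c₂) (hall : ∀ c, c = c₁ ∨ c = c₂) :
    #{p : V × V | f p.1 ≠ f p.2} = 2 * Nat.card c₁.supp * Nat.card c₂.supp := by
  classical
  have hsupp (c : (G.deleteEdges (G.crossingEdges f)).ConnectedComponent) :
      Nat.card c.supp = #{v | (G.deleteEdges (G.crossingEdges f)).connectedComponentMk v = c} := by
    simp [Nat.card_eq_fintype_card, Fintype.card_subtype, ConnectedComponent.mem_supp_iff]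
  rw [hsupp, hsupp, ← card_filter_ne_eq_of_forall_eq_or_eq hne fun v => hall _]
  exact congrArg card <| filter_congr fun p _ =>
    (eq_iff_connectedComponentMk_eq_of_forall_eq_or_eq hG hall p.1 p.2).not

end SimpleGraph

theorem sum_hammingDist_eq_sum_card_filter_ne {V ι : Type*} [Fintype V] [Fintype ι]
    {γ : ι → Type*} [∀ i, DecidableEq (γ i)] (ℓ : V → ∀ i, γ i) :
    ∑ p : V × V, hammingDist (ℓ p.1) (ℓ p.2) = ∑ i, #{p : V × V | ℓ p.1 i ≠ ℓ p.2 i} := by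
  simp only [hammingDist, card_filter]
  exact sum_comm

theorem wiener_cut_method_general {V : Type*} [Fintype V] {k : ℕ}
    (G : SimpleGraph V) (hG : G.Connected)
    (ℓ : V → Fin k → Bool)
    (hiso : ∀ u v : V, G.dist u v = hammingDist (ℓ u) (ℓ v))
    (F : Fin k → Set (Sym2 V))
    (hF : ∀ i, F i = {e | ∃ u v : V, e = s(u, v) ∧ G.Adj u v ∧ ℓ u i ≠ ℓ v i})
    (n₁ n₂ : Fin k → ℕ)
    (hcomp : ∀ i, ∃ c₁ c₂ : (G.deleteEdges (F i)).ConnectedComponent,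
      c₁ ≠ c₂ ∧ (∀ c, c = c₁ ∨ c = c₂) ∧
      n₁ i = Nat.card c₁.supp ∧ n₂ i = Nat.card c₂.supp) :
    (∑ p : V × V, (G.dist p.1 p.2 : ℚ)) / 2 = ∑ i : Fin k, (n₁ i : ℚ) * (n₂ i : ℚ) := by
  obtain rfl : F = fun i => G.crossingEdges (ℓ · i) := funext hF
  have hcut (i : Fin k) : #{p : V × V | ℓ p.1 i ≠ ℓ p.2 i} = 2 * n₁ i * n₂ i := by
    obtain ⟨c₁, c₂, hne, hall, hn₁, hn₂⟩ := hcomp i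
    rw [hn₁, hn₂]
    exact SimpleGraph.card_filter_ne_eq_of_two_components hG hne hall
  have hW : ∑ p : V × V, G.dist p.1 p.2 = 2 * ∑ i, n₁ i * n₂ i := by
    simp only [hiso, sum_hammingDist_eq_sum_card_filter_ne, hcut, mul_sum, mul_assoc]
  rw [div_eq_iff two_ne_zero, mul_comm]
  exact_mod_cast hW

/-- Cut method for partial cubes: if `G` embeds isometrically into a hypercube
(via a labeling `ℓ` so that graph distance equals Hamming distance), the
`Θ`-class `F i` consists of the edges whose endpoint labels differ in
coordinate `i`, and each `G - F i` has exactly two connected components of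
sizes `n₁ i` and `n₂ i`, then `W(G) = ∑ i, n₁ i · n₂ i`. -/
theorem wiener_cut_method {V : Type*} [Fintype V] [DecidableEq V] {k : ℕ}
    (G : SimpleGraph V) (hG : G.Connected)
    (ℓ : V → Fin k → Bool)
    (hiso : ∀ u v : V, G.dist u v = hammingDist (ℓ u) (ℓ v))
    (F : Fin k → Set (Sym2 V))
    (hF : ∀ i, F i = {e | ∃ u v : V, e = s(u, v) ∧ G.Adj u v ∧ ℓ u i ≠ ℓ v i})
    (n₁ n₂ : Fin k → ℕ)
    (hcomp : ∀ i, ∃ c₁ c₂ : (G.deleteEdges (F i)).ConnectedComponent,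
      c₁ ≠ c₂ ∧ (∀ c, c = c₁ ∨ c = c₂) ∧
      n₁ i = Nat.card c₁.supp ∧ n₂ i = Nat.card c₂.supp) :
    (∑ p : V × V, (G.dist p.1 p.2 : ℚ)) / 2 = ∑ i : Fin k, (n₁ i : ℚ) * (n₂ i : ℚ) :=
  wiener_cut_method_general G hG ℓ hiso F hF n₁ n₂ hcomp
end

section
/- For integers p ≥ 2, the Wiener index of the hexagonal square-cell configuration H(p) equals (158p⁵ − 35p³ − 3p)/15. -/
/-!
Cut method. For integers `x, y` in `[a, b]`, `|x - y|` is the number of cuts `c + ½`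
(`a ≤ c < b`) separating them, so the sum of `|f u - f v|` over ordered pairs of a finite set
is `2 ∑_c N_c (n - N_c)`, where `N_c` counts the points with `f u ≤ c`. For `H(p)` the rows
and columns are intervals of lengths linear in their index, so on each of the five pieces of
the cut range (two horizontal, three vertical) `N_c` is a quadratic in `c`, and Faulhaber's
formulas sum `N_c (4p² - N_c)` to a quintic in `p`.
-/

/-- The hexagonal square-cell configuration `H(p)` as a region of the integer
square lattice (equivalently `BT(3p−2, p, p)`): rows `y = 0, …, 2p−1`, where for
`y ≤ p−1` row `y` is `[-y, p+y]` and for `y ≥ p` row `y` is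
`[-(p-1)+(y-p), 2p-1-(y-p)]`. -/
noncomputable def hexRegion (p : ℤ) : Finset (ℤ × ℤ) :=
  (Finset.Icc (-(2 * p)) (2 * p) ×ˢ Finset.Icc (-(2 * p)) (2 * p)).filter fun z =>
    (0 ≤ z.2 ∧ z.2 ≤ p - 1 ∧ -z.2 ≤ z.1 ∧ z.1 ≤ p + z.2) ∨
    (p ≤ z.2 ∧ z.2 ≤ 2 * p - 1 ∧ -(p - 1) + (z.2 - p) ≤ z.1 ∧ z.1 ≤ 2 * p - 1 - (z.2 - p))

open Finset

section CutMethod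

variable {α : Type*}

theorem abs_sub_eq_card_Ico_add_card_Ico (x y : ℤ) :
    |x - y| = (#(Ico x y) : ℤ) + #(Ico y x) := by
  rw [Int.card_Ico, Int.card_Ico]
  rcases abs_cases (x - y) with ⟨h, _⟩ | ⟨h, _⟩ <;> omega

theorem card_Ico_eq_sum_boole_mul_boole {a b x y : ℤ} (hx : x ∈ Icc a b) (hy : y ∈ Icc a b) :
    (#(Ico x y) : ℤ) =
      ∑ c ∈ Ico a b, (if x ≤ c then 1 else 0) * (if c < y then 1 else 0) := by
  simp only [ite_zero_mul_ite_zero, mul_one, sum_boole]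
  congr 2
  ext c
  simp only [mem_Ico, mem_filter, mem_Icc] at hx hy ⊢
  omega

theorem sum_sum_abs_sub_eq_sum_cut (S : Finset α) (f : α → ℤ) {a b : ℤ}
    (hf : ∀ u ∈ S, f u ∈ Icc a b) :
    ∑ u ∈ S, ∑ v ∈ S, |f u - f v| =
      2 * ∑ c ∈ Ico a b, (#{u ∈ S | f u ≤ c} : ℤ) * (#S - #{u ∈ S | f u ≤ c}) := by
  have hcompl (c : ℤ) : (#S : ℤ) - #{u ∈ S | f u ≤ c} = #{u ∈ S | c < f u} := by
    rw [← card_filter_add_card_filter_not (s := S) (fun u => f u ≤ c)]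
    simp only [not_le, Nat.cast_add, add_sub_cancel_left]
  calc ∑ u ∈ S, ∑ v ∈ S, |f u - f v|
      = ∑ u ∈ S, ∑ v ∈ S, ((#(Ico (f u) (f v)) : ℤ) + #(Ico (f v) (f u))) := by
        simp only [abs_sub_eq_card_Ico_add_card_Ico]
    _ = 2 * ∑ u ∈ S, ∑ v ∈ S, (#(Ico (f u) (f v)) : ℤ) := by
        simp only [sum_add_distrib]
        rw [sum_comm (f := fun u v => (#(Ico (f v) (f u)) : ℤ))]
        ring
    _ = 2 * ∑ u ∈ S, ∑ v ∈ S, ∑ c ∈ Ico a b,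
          (if f u ≤ c then 1 else 0) * (if c < f v then 1 else 0) := by
        congr 1
        refine sum_congr rfl fun u hu => sum_congr rfl fun v hv => ?_
        exact card_Ico_eq_sum_boole_mul_boole (hf u hu) (hf v hv)
    _ = 2 * ∑ c ∈ Ico a b, (#{u ∈ S | f u ≤ c} : ℤ) * #{u ∈ S | c < f u} := by
        simp only [natCast_card_filter, sum_mul_sum]
        rw [(sum_congr rfl fun u _ => sum_comm).trans sum_comm]
    _ = _ := by simp only [hcompl]

theorem card_filter_le_add_one (S : Finset α) (f : α → ℤ) (c : ℤ) :
    #{u ∈ S | f u ≤ c + 1} = #{u ∈ S | f u ≤ c} + #{u ∈ S | f u = c + 1} := by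
  classical
  rw [← card_union_of_disjoint (disjoint_filter.2 fun u _ h => by omega), ← filter_or]
  simp only [Int.le_add_one_iff]

theorem card_filter_le_eq_of_card_filter_eq (S : Finset α) (f : α → ℤ) (G : ℤ → ℚ) {a b : ℤ}
    (ha : (#{u ∈ S | f u ≤ a} : ℚ) = G a)
    (hstep : ∀ c, a ≤ c → c < b → (#{u ∈ S | f u = c + 1} : ℚ) = G (c + 1) - G c)
    {c : ℤ} (hac : a ≤ c) (hcb : c ≤ b) : (#{u ∈ S | f u ≤ c} : ℚ) = G c := by
  induction c, hac using Int.leInduction with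
  | base => exact ha
  | succ c hac ih =>
    rw [card_filter_le_add_one, Nat.cast_add, ih (by omega), hstep c hac (by omega)]
    ring

end CutMethod

-- `s₁`, `s₂`, `s₁ ^ 2`, `s₄` are Faulhaber's sums `∑_{0 ≤ c < m} c ^ k` for `k = 1, 2, 3, 4`.
def quadraticCutPrimitive (k₂ k₁ k₀ T m : ℚ) : ℚ :=
  let s₁ := m * (m - 1) / 2
  let s₂ := m * (m - 1) * (2 * m - 1) / 6
  let s₄ := m * (m - 1) * (2 * m - 1) * (3 * m ^ 2 - 3 * m - 1) / 30
  T * (k₂ * s₂ + k₁ * s₁ + k₀ * m) -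
    (k₂ ^ 2 * s₄ + 2 * k₂ * k₁ * s₁ ^ 2 + (k₁ ^ 2 + 2 * k₂ * k₀) * s₂ + 2 * k₁ * k₀ * s₁ +
      k₀ ^ 2 * m)

theorem sum_Ico_mul_sub_eq_of_quadratic {N : ℤ → ℚ} (k₂ k₁ k₀ T : ℚ) {a b : ℤ} (hab : a ≤ b)
    (hN : ∀ c ∈ Ico a b, N c = k₂ * c ^ 2 + k₁ * c + k₀) :
    ∑ c ∈ Ico a b, N c * (T - N c) =
      quadraticCutPrimitive k₂ k₁ k₀ T b - quadraticCutPrimitive k₂ k₁ k₀ T a := by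
  rw [sum_congr rfl fun c hc => by rw [hN c hc]]
  clear hN
  induction b, hab using Int.leInduction with
  | base => simp
  | succ b hab ih =>
    rw [← insert_Ico_right_eq_Ico_add_one hab, sum_insert right_notMem_Ico, ih]
    simp only [quadraticCutPrimitive]
    push_cast
    ring

theorem card_filter_snd_eq {S : Finset (ℤ × ℤ)} {y lo hi : ℤ} (hle : lo ≤ hi + 1)
    (hS : ∀ x, (x, y) ∈ S ↔ lo ≤ x ∧ x ≤ hi) : (#{u ∈ S | u.2 = y} : ℚ) = hi - lo + 1 := by
  have hfiber : {u ∈ S | u.2 = y} = Icc lo hi ×ˢ {y} := by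
    ext ⟨x, y'⟩
    simp only [mem_filter, mem_product, mem_Icc, mem_singleton]
    constructor
    · rintro ⟨h, rfl⟩; exact ⟨(hS x).1 h, rfl⟩
    · rintro ⟨h, rfl⟩; exact ⟨(hS x).2 h, rfl⟩
  have hcard : ((hi + 1 - lo).toNat : ℤ) = hi + 1 - lo := Int.toNat_of_nonneg (by omega)
  rw [hfiber, card_product, Int.card_Icc, card_singleton, mul_one]
  exact_mod_cast (by rw [hcard]; ring : ((hi + 1 - lo).toNat : ℤ) = hi - lo + 1)

theorem card_filter_fst_eq {S : Finset (ℤ × ℤ)} {x lo hi : ℤ} (hle : lo ≤ hi + 1)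
    (hS : ∀ y, (x, y) ∈ S ↔ lo ≤ y ∧ y ≤ hi) : (#{u ∈ S | u.1 = x} : ℚ) = hi - lo + 1 := by
  have hfiber : {u ∈ S | u.1 = x} = {x} ×ˢ Icc lo hi := by
    ext ⟨x', y⟩
    simp only [mem_filter, mem_product, mem_Icc, mem_singleton]
    constructor
    · rintro ⟨h, rfl⟩; exact ⟨rfl, (hS y).1 h⟩
    · rintro ⟨rfl, h⟩; exact ⟨(hS y).2 h, rfl⟩
  have hcard : ((hi + 1 - lo).toNat : ℤ) = hi + 1 - lo := Int.toNat_of_nonneg (by omega)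
  rw [hfiber, card_product, Int.card_Icc, card_singleton, one_mul]
  exact_mod_cast (by rw [hcard]; ring : ((hi + 1 - lo).toNat : ℤ) = hi - lo + 1)

namespace hexRegion

variable {p : ℤ}

theorem mem_iff {x y : ℤ} (hp : 0 ≤ p) : (x, y) ∈ hexRegion p ↔
    (0 ≤ y ∧ y ≤ p - 1 ∧ -y ≤ x ∧ x ≤ p + y) ∨
      (p ≤ y ∧ y ≤ 2 * p - 1 ∧ y - 2 * p + 1 ≤ x ∧ x ≤ 3 * p - 1 - y) := by
  simp only [hexRegion, mem_filter, mem_product, mem_Icc]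
  omega

theorem card_filter_snd_le_of_le_sub_one (hp : 0 ≤ p) {c : ℤ} (h₁ : -1 ≤ c) (h₂ : c ≤ p - 1) :
    (#{u ∈ hexRegion p | u.2 ≤ c} : ℚ) = (c + 1) * (c + p + 1) := by
  refine card_filter_le_eq_of_card_filter_eq _ _ (fun c : ℤ => ((c : ℚ) + 1) * (c + p + 1))
    ?_ (fun c h₁ h₂ => ?_) h₁ h₂
  · rw [card_eq_zero.2 (filter_eq_empty_iff.2 fun ⟨x, y⟩ hu => by rw [mem_iff hp] at hu; omega)]
    simp
  · rw [card_filter_snd_eq (lo := -(c + 1)) (hi := p + (c + 1)) (by omega)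
      fun x => by rw [mem_iff hp]; omega]
    push_cast; ring

theorem card_filter_snd_le_of_sub_one_le (hp : 0 ≤ p) {c : ℤ} (h₁ : p - 1 ≤ c)
    (h₂ : c ≤ 2 * p - 1) :
    (#{u ∈ hexRegion p | u.2 ≤ c} : ℚ) = 4 * p ^ 2 - (2 * p - 1 - c) * (3 * p - 1 - c) := by
  refine card_filter_le_eq_of_card_filter_eq _ _
    (fun c : ℤ => 4 * (p : ℚ) ^ 2 - (2 * p - 1 - c) * (3 * p - 1 - c)) ?_ (fun c h₁ h₂ => ?_) h₁ h₂
  · rw [card_filter_snd_le_of_le_sub_one hp (by omega) le_rfl]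
    push_cast; ring
  · rw [card_filter_snd_eq (lo := c + 1 - 2 * p + 1) (hi := 3 * p - 1 - (c + 1)) (by omega)
      fun x => by rw [mem_iff hp]; omega]
    push_cast; ring

theorem card_eq (hp : 0 ≤ p) : (#(hexRegion p) : ℚ) = 4 * p ^ 2 := by
  have hall : {u ∈ hexRegion p | u.2 ≤ 2 * p - 1} = hexRegion p :=
    filter_true_of_mem fun ⟨x, y⟩ hu => by rw [mem_iff hp] at hu; omega
  rw [← hall, card_filter_snd_le_of_sub_one_le hp (by omega) le_rfl]
  push_cast; ring

theorem card_filter_fst_le_of_le_zero (hp : 0 ≤ p) {c : ℤ} (h₁ : -p ≤ c) (h₂ : c ≤ 0) :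
    (#{u ∈ hexRegion p | u.1 ≤ c} : ℚ) = (c + p) * (c + p + 1) := by
  refine card_filter_le_eq_of_card_filter_eq _ _ (fun c : ℤ => ((c : ℚ) + p) * (c + p + 1))
    ?_ (fun c h₁ h₂ => ?_) h₁ h₂
  · rw [card_eq_zero.2 (filter_eq_empty_iff.2 fun ⟨x, y⟩ hu => by rw [mem_iff hp] at hu; omega)]
    simp
  · rw [card_filter_fst_eq (lo := -(c + 1)) (hi := 2 * p - 1 + (c + 1)) (by omega)
      fun y => by rw [mem_iff hp]; omega]
    push_cast; ring

theorem card_filter_fst_le_of_nonneg_of_le (hp : 0 ≤ p) {c : ℤ} (h₁ : 0 ≤ c) (h₂ : c ≤ p) :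
    (#{u ∈ hexRegion p | u.1 ≤ c} : ℚ) = p * (p + 1) + 2 * p * c := by
  refine card_filter_le_eq_of_card_filter_eq _ _ (fun c : ℤ => (p : ℚ) * (p + 1) + 2 * p * c)
    ?_ (fun c h₁ h₂ => ?_) h₁ h₂
  · rw [card_filter_fst_le_of_le_zero hp (by omega) le_rfl]
    push_cast; ring
  · rw [card_filter_fst_eq (lo := 0) (hi := 2 * p - 1) (by omega)
      fun y => by rw [mem_iff hp]; omega]
    push_cast; ring

theorem card_filter_fst_le_of_le (hp : 0 ≤ p) {c : ℤ} (h₁ : p ≤ c) (h₂ : c ≤ 2 * p - 1) :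
    (#{u ∈ hexRegion p | u.1 ≤ c} : ℚ) = 4 * p ^ 2 - (2 * p - 1 - c) * (2 * p - c) := by
  refine card_filter_le_eq_of_card_filter_eq _ _
    (fun c : ℤ => 4 * (p : ℚ) ^ 2 - (2 * p - 1 - c) * (2 * p - c)) ?_ (fun c h₁ h₂ => ?_) h₁ h₂
  · rw [card_filter_fst_le_of_nonneg_of_le hp (by omega) le_rfl]
    ring
  · rw [card_filter_fst_eq (lo := c + 1 - p) (hi := 3 * p - 1 - (c + 1)) (by omega)
      fun y => by rw [mem_iff hp]; omega]
    push_cast; ring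

theorem sum_sum_abs_sub_snd (hp : 1 ≤ p) :
    ((∑ u ∈ hexRegion p, ∑ v ∈ hexRegion p, |u.2 - v.2| : ℤ) : ℚ) =
      (138 * p ^ 5 - 20 * p ^ 3 + 2 * p) / 15 := by
  have hp₀ : 0 ≤ p := by omega
  rw [sum_sum_abs_sub_eq_sum_cut _ _ (a := 0) (b := 2 * p - 1)
    fun ⟨x, y⟩ hu => by rw [mem_iff hp₀] at hu; rw [mem_Icc]; omega]
  push_cast
  rw [card_eq hp₀, ← Ico_union_Ico_eq_Ico (b := p) (by omega) (by omega),
    sum_union (Ico_disjoint_Ico_consecutive _ _ _),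
    sum_Ico_mul_sub_eq_of_quadratic 1 (p + 2) (p + 1) _ (by omega) fun c hc => by
      rw [mem_Ico] at hc
      rw [card_filter_snd_le_of_le_sub_one hp₀ (by omega) (by omega)]; ring,
    sum_Ico_mul_sub_eq_of_quadratic (-1) (5 * p - 2) (4 * p ^ 2 - (2 * p - 1) * (3 * p - 1)) _
      (by omega) fun c hc => by
      rw [mem_Ico] at hc
      rw [card_filter_snd_le_of_sub_one_le hp₀ (by omega) (by omega)]; ring]
  simp only [quadraticCutPrimitive]
  push_cast
  ring

theorem sum_sum_abs_sub_fst (hp : 1 ≤ p) :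
    ((∑ u ∈ hexRegion p, ∑ v ∈ hexRegion p, |u.1 - v.1| : ℤ) : ℚ) =
      (178 * p ^ 5 - 50 * p ^ 3 - 8 * p) / 15 := by
  have hp₀ : 0 ≤ p := by omega
  rw [sum_sum_abs_sub_eq_sum_cut _ _ (a := 1 - p) (b := 2 * p - 1)
    fun ⟨x, y⟩ hu => by rw [mem_iff hp₀] at hu; rw [mem_Icc]; omega]
  push_cast
  rw [card_eq hp₀, ← Ico_union_Ico_eq_Ico (b := p) (by omega) (by omega),
    sum_union (Ico_disjoint_Ico_consecutive _ _ _),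
    ← Ico_union_Ico_eq_Ico (a := 1 - p) (b := 0) (c := p) (by omega) (by omega),
    sum_union (Ico_disjoint_Ico_consecutive _ _ _),
    sum_Ico_mul_sub_eq_of_quadratic 1 (2 * p + 1) (p * (p + 1)) _ (by omega) fun c hc => by
      rw [mem_Ico] at hc
      rw [card_filter_fst_le_of_le_zero hp₀ (by omega) (by omega)]; ring,
    sum_Ico_mul_sub_eq_of_quadratic 0 (2 * p) (p * (p + 1)) _ (by omega) fun c hc => by
      rw [mem_Ico] at hc
      rw [card_filter_fst_le_of_nonneg_of_le hp₀ (by omega) (by omega)]; ring,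
    sum_Ico_mul_sub_eq_of_quadratic (-1) (4 * p - 1) (2 * p) _ (by omega) fun c hc => by
      rw [mem_Ico] at hc
      rw [card_filter_fst_le_of_le hp₀ (by omega) (by omega)]; ring]
  simp only [quadraticCutPrimitive]
  push_cast
  ring

end hexRegion

/-- For `p ≥ 2`, the Wiener index of the hexagonal square-cell configuration
`H(p)` (sum of L¹ = graph distances over unordered pairs) equals
`(158p⁵ − 35p³ − 3p)/15`. -/
theorem wiener_hexagonal (p : ℤ) (hp : 2 ≤ p) :
    (∑ u ∈ hexRegion p, ∑ v ∈ hexRegion p, ((|u.1 - v.1| + |u.2 - v.2| : ℤ) : ℚ)) / 2 =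
      (158 * (p : ℚ) ^ 5 - 35 * (p : ℚ) ^ 3 - 3 * (p : ℚ)) / 15 := by
  have hsplit : ∑ u ∈ hexRegion p, ∑ v ∈ hexRegion p, ((|u.1 - v.1| + |u.2 - v.2| : ℤ) : ℚ) =
      ((∑ u ∈ hexRegion p, ∑ v ∈ hexRegion p, |u.1 - v.1| : ℤ) : ℚ) +
        ((∑ u ∈ hexRegion p, ∑ v ∈ hexRegion p, |u.2 - v.2| : ℤ) : ℚ) := by
    simp only [Int.cast_sum, Int.cast_add, sum_add_distrib]
  rw [hsplit, hexRegion.sum_sum_abs_sub_fst (by omega), hexRegion.sum_sum_abs_sub_snd (by omega)]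
  ring
end

section
/- The irregular square-cell configuration ISC(p, q, m, n) has exactly (2n² − p² − q² + 4mn + 8m + 4n)/4 vertices and (2n² − p² − q² + 4mn + 4m + p + q − 2)/2 edges. -/
/-- The irregular square-cell configuration `ISC(p,q,m,n)` as a region of the
integer square lattice: with `Y₁ = (n−p)/2`, the lower trapezium consists of
rows `y = 0, …, Y₁` equal to `[-y, p+y]`, the middle parallelogram of rows
`y = Y₁+1, …, Y₁+m−1` equal to `[-y, n+1-y]`, and the upper inverted trapezium
of rows `y = Y₁+m, …, Y₁+m+(n−q)/2` equal to
`[-Y₁-m+1+j, -Y₁-m+1+n-j]` where `j = y-Y₁-m`. -/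
noncomputable def ISCregion (p q m n : ℤ) : Finset (ℤ × ℤ) :=
  (Finset.Icc (-(n + m)) (n + m) ×ˢ Finset.Icc (-(n + m)) (n + m)).filter fun z =>
    (0 ≤ z.2 ∧ z.2 ≤ (n - p) / 2 ∧ -z.2 ≤ z.1 ∧ z.1 ≤ p + z.2) ∨
    ((n - p) / 2 + 1 ≤ z.2 ∧ z.2 ≤ (n - p) / 2 + m - 1 ∧
      -z.2 ≤ z.1 ∧ z.1 ≤ n + 1 - z.2) ∨
    ((n - p) / 2 + m ≤ z.2 ∧ z.2 ≤ (n - p) / 2 + m + (n - q) / 2 ∧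
      -((n - p) / 2) - m + 1 + (z.2 - ((n - p) / 2 + m)) ≤ z.1 ∧
      z.1 ≤ -((n - p) / 2) - m + 1 + n - (z.2 - ((n - p) / 2 + m)))

/-- The graph of `ISC(p,q,m,n)`: its vertices are the lattice points of the
region, adjacent when at L¹ distance 1. -/
def ISCgraph (p q m n : ℤ) : SimpleGraph ↥(ISCregion p q m n) where
  Adj u v := |u.1.1 - v.1.1| + |u.1.2 - v.1.2| = 1
  symm := ⟨fun u v h => by simpa [abs_sub_comm] using h⟩
  loopless := ⟨fun u h => by simp at h⟩

instance (p q m n : ℤ) : DecidableRel (ISCgraph p q m n).Adj :=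
  fun u v => decidable_of_iff (|u.1.1 - v.1.1| + |u.1.2 - v.1.2| = 1) Iff.rfl

/-!
Each row `y = const` of the region is an integer interval whose length is an affine function of
`y` on each of the three parts (trapezium, parallelogram, inverted trapezium), so the vertex count
is a sum of three arithmetic progressions. An edge is a pair `{z, z + e}` with `e` a unit vector;
by the handshake lemma and the symmetry `e ↔ -e`, the edges are counted by the points `z` with
`z + (1, 0)` in the region plus those with `z + (0, 1)` in the region, and these points again form
rows that are intervals with piecewise affine lengths.
-/

open Finset

lemma card_filter_add_neg_mem {G : Type*} [AddGroup G] [DecidableEq G] (S : Finset G) (d : G) :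
    #{z ∈ S | z + -d ∈ S} = #{z ∈ S | z + d ∈ S} :=
  card_nbij' (· + -d) (· + d) (fun z hz => by simp_all) (fun z hz => by simp_all)
    (fun z _ => by simp) (fun z _ => by simp)

-- Opposite directions are written as negations so that `card_filter_add_neg_mem` pairs them.
def latticeUnits : Finset (ℤ × ℤ) := {(1, 0), -(1, 0), (0, 1), -(0, 1)}

lemma mem_latticeUnits_iff (z : ℤ × ℤ) : z ∈ latticeUnits ↔ |z.1| + |z.2| = 1 := by
  obtain ⟨x, y⟩ := z
  simp only [latticeUnits, mem_insert, mem_singleton, Prod.neg_mk, Prod.mk.injEq]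
  rcases abs_cases x with ⟨hx, _⟩ | ⟨hx, _⟩ <;> rcases abs_cases y with ⟨hy, _⟩ | ⟨hy, _⟩ <;> omega

lemma degree_eq_card_latticeUnits {S : Finset (ℤ × ℤ)} (G : SimpleGraph S) [DecidableRel G.Adj]
    (hG : ∀ u v, G.Adj u v ↔ |u.1.1 - v.1.1| + |u.1.2 - v.1.2| = 1) (v : S) :
    G.degree v = #{d ∈ latticeUnits | v.1 + d ∈ S} := by
  rw [← SimpleGraph.card_neighborFinset_eq_degree]
  refine card_bij' (fun w _ => w.1 - v.1) (fun d hd => ⟨v.1 + d, (mem_filter.1 hd).2⟩)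
    (fun w hw => ?_) (fun d hd => ?_) (fun w _ => by simp) (fun d _ => by simp)
  · rw [SimpleGraph.mem_neighborFinset, G.adj_comm, hG] at hw
    simpa [mem_latticeUnits_iff] using hw
  · rw [mem_filter, mem_latticeUnits_iff] at hd
    simpa [G.adj_comm, hG] using hd.1

lemma card_edgeFinset_eq_of_adj_iff {S : Finset (ℤ × ℤ)} (G : SimpleGraph S) [DecidableRel G.Adj]
    (hG : ∀ u v, G.Adj u v ↔ |u.1.1 - v.1.1| + |u.1.2 - v.1.2| = 1) :
    #G.edgeFinset = #{z ∈ S | z + (1, 0) ∈ S} + #{z ∈ S | z + (0, 1) ∈ S} := by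
  have hsum : 2 * #G.edgeFinset = ∑ d ∈ latticeUnits, #{z ∈ S | z + d ∈ S} := by
    rw [← SimpleGraph.sum_degrees_eq_twice_card_edges,
      sum_congr rfl fun v _ => degree_eq_card_latticeUnits G hG v,
      sum_coe_sort S fun z => #{d ∈ latticeUnits | z + d ∈ S}]
    simp only [card_filter]
    exact sum_comm
  rw [latticeUnits, sum_insert (by decide), sum_insert (by decide), sum_insert (by decide),
    sum_singleton, card_filter_add_neg_mem, card_filter_add_neg_mem] at hsum
  omega

lemma two_mul_sum_Ico_of_eq_linear {f : ℤ → ℤ} {u v c d : ℤ} (huv : u ≤ v)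
    (hf : ∀ y ∈ Ico u v, f y = c + d * y) :
    2 * ∑ y ∈ Ico u v, f y = (v - u) * (2 * c + d * (u + v - 1)) := by
  rw [sum_congr rfl hf]
  clear hf
  induction v, huv using Int.leInduction with
  | base => simp
  | succ v huv ih =>
    rw [show Ico u (v + 1) = insert v (Ico u v) from (insert_Ico_right_eq_Ico_succ huv).symm,
      sum_insert (by simp), mul_add, ih]
    ring

lemma card_eq_sum_rows {S : Finset (ℤ × ℤ)} {Y : Finset ℤ} {f g : ℤ → ℤ}
    (hS : ∀ x y, (x, y) ∈ S ↔ y ∈ Y ∧ f y ≤ x ∧ x ≤ g y) (hfg : ∀ y ∈ Y, f y ≤ g y + 1) :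
    (#S : ℤ) = ∑ y ∈ Y, (g y + 1 - f y) := by
  rw [card_eq_sum_card_fiberwise (f := Prod.snd) (t := Y) fun z hz => ((hS z.1 z.2).1 hz).1]
  push_cast
  refine sum_congr rfl fun y hy => ?_
  have hrow : {z ∈ S | z.2 = y} = Icc (f y) (g y) ×ˢ {y} := by
    ext ⟨x, y'⟩
    simp only [mem_filter, hS, mem_product, mem_Icc, mem_singleton]
    constructor
    · rintro ⟨⟨-, hx⟩, rfl⟩; exact ⟨hx, rfl⟩
    · rintro ⟨hx, rfl⟩; exact ⟨⟨hy, hx⟩, rfl⟩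
  rw [hrow, card_product, card_singleton, mul_one, Int.card_Icc]
  have := hfg y hy
  omega

lemma two_mul_card_eq_of_rows_piecewise_linear {S : Finset (ℤ × ℤ)} {f g : ℤ → ℤ}
    {u v w z c₁ d₁ c₂ d₂ c₃ d₃ : ℤ} (hS : ∀ x y, (x, y) ∈ S ↔ y ∈ Ico u z ∧ f y ≤ x ∧ x ≤ g y)
    (huv : u ≤ v) (hvw : v ≤ w) (hwz : w ≤ z) (hfg : ∀ y ∈ Ico u z, f y ≤ g y + 1)
    (h₁ : ∀ y ∈ Ico u v, g y + 1 - f y = c₁ + d₁ * y)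
    (h₂ : ∀ y ∈ Ico v w, g y + 1 - f y = c₂ + d₂ * y)
    (h₃ : ∀ y ∈ Ico w z, g y + 1 - f y = c₃ + d₃ * y) :
    2 * (#S : ℤ) = (v - u) * (2 * c₁ + d₁ * (u + v - 1)) +
      (w - v) * (2 * c₂ + d₂ * (v + w - 1)) + (z - w) * (2 * c₃ + d₃ * (w + z - 1)) := by
  rw [card_eq_sum_rows hS hfg, ← Ico_union_Ico_eq_Ico huv (hvw.trans hwz),
    sum_union (Ico_disjoint_Ico_consecutive _ _ _), ← Ico_union_Ico_eq_Ico hvw hwz,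
    sum_union (Ico_disjoint_Ico_consecutive _ _ _), mul_add, mul_add,
    two_mul_sum_Ico_of_eq_linear huv h₁, two_mul_sum_Ico_of_eq_linear hvw h₂,
    two_mul_sum_Ico_of_eq_linear hwz h₃, add_assoc]

section ISC

variable {p q m n a b : ℤ}

lemma mem_ISCregion_iff (hp : 1 ≤ p) (hpq : p ≤ q) (hqn : q ≤ n) (hm : 1 ≤ m)
    (ha : n - p = 2 * a) (hb : n - q = 2 * b) (x y : ℤ) :
    (x, y) ∈ ISCregion p q m n ↔ y ∈ Ico 0 (a + m + b + 1) ∧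
      max (-y) (y - 2 * (a + m) + 1) ≤ x ∧ x ≤ min (p + y) (n + 1 - y) := by
  have ha' : (n - p) / 2 = a := by omega
  have hb' : (n - q) / 2 = b := by omega
  simp only [ISCregion, mem_filter, mem_product, mem_Icc, mem_Ico, ha', hb']
  omega

lemma four_mul_card_ISCregion (hp : 1 ≤ p) (hpq : p ≤ q) (hqn : q ≤ n) (hm : 1 ≤ m)
    (ha : n - p = 2 * a) (hb : n - q = 2 * b) :
    4 * (#(ISCregion p q m n) : ℤ) = 2 * n ^ 2 - p ^ 2 - q ^ 2 + 4 * m * n + 8 * m + 4 * n := by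
  have := two_mul_card_eq_of_rows_piecewise_linear (mem_ISCregion_iff hp hpq hqn hm ha hb)
    (v := a + 1) (w := a + m) (c₁ := p + 1) (d₁ := 2) (c₂ := n + 2) (d₂ := 0)
    (c₃ := n + 1 + 2 * (a + m)) (d₃ := -2) (by omega) (by omega) (by omega)
    (fun y hy => by rw [mem_Ico] at hy; omega) (fun y hy => by rw [mem_Ico] at hy; omega)
    (fun y hy => by rw [mem_Ico] at hy; omega) (fun y hy => by rw [mem_Ico] at hy; omega)
  linear_combination 2 * this - (n + p + 2 * a + 4) * ha - (n + q - 2 * b) * hb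

lemma four_mul_card_ISCregion_horizontal (hp : 1 ≤ p) (hpq : p ≤ q) (hqn : q ≤ n) (hm : 1 ≤ m)
    (ha : n - p = 2 * a) (hb : n - q = 2 * b) :
    4 * (#{z ∈ ISCregion p q m n | z + (1, 0) ∈ ISCregion p q m n} : ℤ) =
      2 * n ^ 2 - p ^ 2 - q ^ 2 + 4 * m * n + 4 * m + 2 * p + 2 * q - 4 := by
  have hmem (x y : ℤ) : (x, y) ∈ {z ∈ ISCregion p q m n | z + (1, 0) ∈ ISCregion p q m n} ↔
      y ∈ Ico 0 (a + m + b + 1) ∧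
        max (-y) (y - 2 * (a + m) + 1) ≤ x ∧ x ≤ min (p + y) (n + 1 - y) - 1 := by
    simp only [mem_filter, Prod.mk_add_mk, add_zero, mem_ISCregion_iff hp hpq hqn hm ha hb, mem_Ico]
    omega
  have := two_mul_card_eq_of_rows_piecewise_linear hmem
    (v := a + 1) (w := a + m) (c₁ := p) (d₁ := 2) (c₂ := n + 1) (d₂ := 0)
    (c₃ := n + 2 * (a + m)) (d₃ := -2) (by omega) (by omega) (by omega)
    (fun y hy => by rw [mem_Ico] at hy; omega) (fun y hy => by rw [mem_Ico] at hy; omega)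
    (fun y hy => by rw [mem_Ico] at hy; omega) (fun y hy => by rw [mem_Ico] at hy; omega)
  linear_combination 2 * this - (n + p + 2 * a + 2) * ha - (n + q - 2 * b - 2) * hb

lemma four_mul_card_ISCregion_vertical (hp : 1 ≤ p) (hpq : p ≤ q) (hqn : q ≤ n) (hm : 1 ≤ m)
    (ha : n - p = 2 * a) (hb : n - q = 2 * b) :
    4 * (#{z ∈ ISCregion p q m n | z + (0, 1) ∈ ISCregion p q m n} : ℤ) =
      2 * n ^ 2 - p ^ 2 - q ^ 2 + 4 * m * n + 4 * m := by
  have hmem (x y : ℤ) : (x, y) ∈ {z ∈ ISCregion p q m n | z + (0, 1) ∈ ISCregion p q m n} ↔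
      y ∈ Ico 0 (a + m + b) ∧
        max (-y) (y + 2 - 2 * (a + m)) ≤ x ∧ x ≤ min (p + y) (n - y) := by
    simp only [mem_filter, Prod.mk_add_mk, add_zero, mem_ISCregion_iff hp hpq hqn hm ha hb, mem_Ico]
    omega
  have := two_mul_card_eq_of_rows_piecewise_linear hmem
    (v := a) (w := a + m) (c₁ := p + 1) (d₁ := 2) (c₂ := n + 1) (d₂ := 0)
    (c₃ := n - 1 + 2 * (a + m)) (d₃ := -2) (by omega) (by omega) (by omega)
    (fun y hy => by rw [mem_Ico] at hy; omega) (fun y hy => by rw [mem_Ico] at hy; omega)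
    (fun y hy => by rw [mem_Ico] at hy; omega) (fun y hy => by rw [mem_Ico] at hy; omega)
  linear_combination 2 * this - (n + p + 2 * a) * ha - (n + q - 2 * b) * hb

end ISC

/-- `ISC(p,q,m,n)` has exactly `(2n² − p² − q² + 4mn + 8m + 4n)/4` vertices and
`(2n² − p² − q² + 4mn + 4m + p + q − 2)/2` edges. -/
theorem ISC_card_vertices_edges (p q m n : ℤ) (hp : 1 ≤ p) (hpq : p ≤ q)
    (hqn : q ≤ n) (hm : 1 ≤ m) (hpar₁ : (n - p) % 2 = 0) (hpar₂ : (n - q) % 2 = 0) :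
    4 * ((ISCregion p q m n).card : ℤ) =
        2 * n ^ 2 - p ^ 2 - q ^ 2 + 4 * m * n + 8 * m + 4 * n ∧
    2 * ((ISCgraph p q m n).edgeFinset.card : ℤ) =
        2 * n ^ 2 - p ^ 2 - q ^ 2 + 4 * m * n + 4 * m + p + q - 2 := by
  obtain ⟨a, ha⟩ := Int.dvd_of_emod_eq_zero hpar₁
  obtain ⟨b, hb⟩ := Int.dvd_of_emod_eq_zero hpar₂
  refine ⟨four_mul_card_ISCregion hp hpq hqn hm ha hb, ?_⟩
  rw [card_edgeFinset_eq_of_adj_iff (ISCgraph p q m n) fun _ _ => Iff.rfl, Nat.cast_add]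
  linarith [four_mul_card_ISCregion_horizontal hp hpq hqn hm ha hb,
    four_mul_card_ISCregion_vertical hp hpq hqn hm ha hb]
end

section
/- For the trapezium square-cell configuration T(n,p) with n, p ≥ 1 of the same parity, the Wiener index equals (1/960)·(11n⁵ + 220n⁴ − 30n³p² + 1400n³ + n²(20p³ − 360p² − 20p + 3440) + n(−5p⁴ + 160p³ − 880p² − 160p + 3344) + 4p⁵ − 20p⁴ + 140p³ − 400p² − 144p + 960). -/
/-- The trapezium square-cell configuration `T(n,p)` as a region of the integer
square lattice: with `Y₁ = (n−p)/2`, rows `y = 0, …, Y₁` are `[-y, p+y]` (widths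
`p+1, p+3, …, n+1` from bottom edge of length `p` widening to `n`), plus the
top row `y = Y₁+1` equal to `[-Y₁, p+Y₁]`. -/
noncomputable def trapRegion (n p : ℤ) : Finset (ℤ × ℤ) :=
  (Finset.Icc (-n) n ×ˢ Finset.Icc (-n) n).filter fun z =>
    (0 ≤ z.2 ∧ z.2 ≤ (n - p) / 2 ∧ -z.2 ≤ z.1 ∧ z.1 ≤ p + z.2) ∨
    (z.2 = (n - p) / 2 + 1 ∧ -((n - p) / 2) ≤ z.1 ∧ z.1 ≤ p + (n - p) / 2)

/-!
Write `n = p + 2m`. The distance is L¹, so the Wiener index is the sum of a horizontal and a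
vertical part, and each is evaluated by the cut method: for integer values `f u`,
`∑ u, ∑ v, |f u - f v| = 2 ∑ c, A c * (N - A c)`, where `N` is the number of vertices and
`A c` the number of vertices with `f u < c`. For the trapezium, `A c` is quadratic in `c` on
each of four ranges of cuts: the horizontal cuts, and the vertical cuts through the left
corner, through the central band `0 ≤ x ≤ p`, and through the right corner (reduced to the left
one by the reflection `x ↦ p - x`). Summing `a (N - a)` for a quadratic `a` needs the power
sums up to the fourth, and the four resulting polynomials add up to the stated quintic.
-/

open Finset

theorem sum_sum_abs_sub_eq_sum_cuts {ι : Type*} (S : Finset ι) (f : ι → ℤ) {lo hi : ℤ}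
    (hf : ∀ u ∈ S, lo ≤ f u ∧ f u ≤ hi) :
    ∑ u ∈ S, ∑ v ∈ S, |f u - f v| =
      2 * ∑ c ∈ Ioc lo hi, (#{u ∈ S | f u < c} : ℤ) * (#S - #{u ∈ S | f u < c}) := by
  set ind : ℤ → ℤ → ℤ := fun a c => if a < c then 1 else 0
  -- `|a - b|` counts the cuts `c` with `min a b < c ≤ max a b`.
  have between (a b : ℤ) (ha : lo ≤ a) (hb : b ≤ hi) :
      ∑ c ∈ Ioc lo hi, ind a c * (1 - ind b c) = (b - a).toNat := by
    have : ∀ c, ind a c * (1 - ind b c) = if c ∈ Ioc a b then 1 else 0 := by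
      intro c; simp only [ind, mem_Ioc]; split_ifs <;> omega
    rw [sum_congr rfl fun c _ => this c, sum_boole, ← Int.card_Ioc]
    congr 2; ext c; simp only [mem_filter, mem_Ioc]; omega
  calc ∑ u ∈ S, ∑ v ∈ S, |f u - f v|
      = ∑ u ∈ S, ∑ v ∈ S, ∑ c ∈ Ioc lo hi,
          (ind (f u) c * (1 - ind (f v) c) + ind (f v) c * (1 - ind (f u) c)) := by
        refine sum_congr rfl fun u hu => sum_congr rfl fun v hv => ?_
        rw [sum_add_distrib, between _ _ (hf u hu).1 (hf v hv).2,
          between _ _ (hf v hv).1 (hf u hu).2]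
        cases abs_cases (f u - f v) <;> omega
    _ = ∑ c ∈ Ioc lo hi, 2 * ((∑ u ∈ S, ind (f u) c) * ∑ v ∈ S, (1 - ind (f v) c)) := by
        rw [← sum_product', sum_comm]
        refine sum_congr rfl fun c _ => ?_
        rw [sum_product, two_mul, sum_mul_sum]
        simp only [sum_add_distrib]
        rw [add_left_cancel_iff, sum_comm]
    _ = _ := by
        simp only [sum_sub_distrib, ind, sum_boole, sum_const, nsmul_eq_mul, mul_one, mul_sum]

theorem sum_Ioc_eq_sum_range {M : Type*} [AddCommMonoid M] (g : ℤ → M) (lo : ℤ) (L : ℕ) :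
    ∑ c ∈ Ioc lo (lo + L), g c = ∑ i ∈ range L, g (lo + (i + 1)) := by
  rw [Int.Ioc_eq_finset_map, sum_map, add_sub_cancel_left, Int.toNat_natCast]
  refine sum_congr rfl fun i _ => ?_
  simp only [Function.Embedding.trans_apply, Nat.castEmbedding_apply, addLeftEmbedding_apply]
  ring_nf

theorem sum_sum_dist_eq_sum_cuts (S : Finset (ℤ × ℤ)) (a b : ℤ) (L L' : ℕ)
    (hS : ∀ u ∈ S, a ≤ u.1 ∧ u.1 ≤ a + L ∧ b ≤ u.2 ∧ u.2 ≤ b + L') :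
    ∑ u ∈ S, ∑ v ∈ S, (|u.1 - v.1| + |u.2 - v.2|) =
      2 * ∑ i ∈ range L,
          (#{u ∈ S | u.1 < a + (i + 1)} : ℤ) * (#S - #{u ∈ S | u.1 < a + (i + 1)}) +
        2 * ∑ i ∈ range L',
          (#{u ∈ S | u.2 < b + (i + 1)} : ℤ) * (#S - #{u ∈ S | u.2 < b + (i + 1)}) := by
  simp only [sum_add_distrib]
  rw [sum_sum_abs_sub_eq_sum_cuts S Prod.fst fun u hu => ⟨(hS u hu).1, (hS u hu).2.1⟩,
    sum_sum_abs_sub_eq_sum_cuts S Prod.snd fun u hu => ⟨(hS u hu).2.2.1, (hS u hu).2.2.2⟩,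
    sum_Ioc_eq_sum_range, sum_Ioc_eq_sum_range]

theorem card_filter_lt_add_one {ι : Type*} (S : Finset ι) (f : ι → ℤ) (c : ℤ) :
    #{u ∈ S | f u < c + 1} = #{u ∈ S | f u < c} + #{u ∈ S | f u = c} := by
  rw [← card_filter_add_card_filter_not (s := {u ∈ S | f u < c + 1}) (fun u => f u < c),
    filter_filter, filter_filter]
  congr 2 <;> exact filter_congr fun u _ => by omega

-- The bracketed polynomials in `K` are the power sums `∑ j ∈ Icc 1 K, j ^ e`, `e = 1, 2, 3, 4`.
theorem sum_range_mul_sub_of_quadratic {F : Type*} [Field F] [CharZero F] (a : ℕ → F)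
    (α β γ N : F) (K : ℕ) (ha : ∀ k < K, a k = α * (k + 1) ^ 2 + β * (k + 1) + γ) :
    ∑ k ∈ range K, a k * (N - a k) =
      N * (α * (K * (K + 1) * (2 * K + 1) / 6) + β * (K * (K + 1) / 2) + γ * K) -
        (α ^ 2 * (K * (K + 1) * (2 * K + 1) * (3 * K ^ 2 + 3 * K - 1) / 30) +
          2 * α * β * (K * (K + 1) / 2) ^ 2 +
          (β ^ 2 + 2 * α * γ) * (K * (K + 1) * (2 * K + 1) / 6) +
          2 * β * γ * (K * (K + 1) / 2) + γ ^ 2 * K) := by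
  rw [sum_congr rfl fun k hk => by rw [ha k (mem_range.mp hk)]]
  clear ha
  induction K with
  | zero => simp
  | succ K ih =>
    rw [sum_range_succ, ih]
    push_cast
    ring

section trapRegion

variable {p m : ℕ}

theorem mem_trapRegion (hp : 0 < p) {u : ℤ × ℤ} :
    u ∈ trapRegion (p + 2 * m) p ↔
      0 ≤ u.2 ∧ u.2 ≤ m + 1 ∧ -min u.2 m ≤ u.1 ∧ u.1 ≤ p + min u.2 m := by
  simp only [trapRegion, mem_filter, mem_product, mem_Icc]
  omega

theorem card_filter_snd_eq_trapRegion (hp : 0 < p) {y : ℤ} (hy₀ : 0 ≤ y)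
    (hy₁ : y ≤ m + 1) :
    (#{u ∈ trapRegion (p + 2 * m) p | u.2 = y} : ℤ) = p + 1 + 2 * min y m := by
  have : {u ∈ trapRegion (p + 2 * m) p | u.2 = y} = Icc (-min y m) (p + min y m) ×ˢ {y} := by
    ext u
    simp only [mem_filter, mem_trapRegion hp, mem_product, mem_Icc, mem_singleton]
    omega
  rw [this, card_product, card_singleton, mul_one, Int.card_Icc]
  omega

theorem card_filter_fst_eq_trapRegion (hp : 0 < p) {x : ℤ} (hx₀ : -m ≤ x)
    (hx₁ : x ≤ p + m) :
    (#{u ∈ trapRegion (p + 2 * m) p | u.1 = x} : ℤ) = m + 2 - max 0 (max (-x) (x - p)) := by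
  have : {u ∈ trapRegion (p + 2 * m) p | u.1 = x} =
      {x} ×ˢ Icc (max 0 (max (-x) (x - p))) (m + 1) := by
    ext u
    simp only [mem_filter, mem_trapRegion hp, mem_product, mem_Icc, mem_singleton]
    omega
  rw [this, card_product, card_singleton, one_mul, Int.card_Icc]
  omega

theorem card_filter_snd_lt_trapRegion (hp : 0 < p) {c : ℤ} (hc₀ : 0 ≤ c)
    (hc₁ : c ≤ m + 1) :
    (#{u ∈ trapRegion (p + 2 * m) p | u.2 < c} : ℤ) = c * (c + p) := by
  induction c, hc₀ using Int.leInduction with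
  | base =>
    rw [zero_mul, Nat.cast_eq_zero, card_eq_zero, filter_eq_empty_iff]
    intro u hu
    have := (mem_trapRegion hp).1 hu
    omega
  | succ c hc ih =>
    rw [card_filter_lt_add_one, Nat.cast_add, ih (by omega),
      card_filter_snd_eq_trapRegion hp hc (by omega), min_eq_left (by omega)]
    ring

theorem card_trapRegion (hp : 0 < p) :
    (#(trapRegion (p + 2 * m) p) : ℤ) = (m + 2) * (p + 1) + m * (m + 3) := by
  have hall :
      {u ∈ trapRegion (p + 2 * m) p | u.2 < (m : ℤ) + 1 + 1} = trapRegion (p + 2 * m) p :=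
    filter_true_of_mem fun u hu => by have := (mem_trapRegion hp).1 hu; omega
  rw [← hall, card_filter_lt_add_one, Nat.cast_add, card_filter_snd_lt_trapRegion hp (by omega)
    le_rfl, card_filter_snd_eq_trapRegion hp (by omega) le_rfl, min_eq_right (by omega)]
  ring

theorem two_mul_card_filter_fst_lt_trapRegion_left (hp : 0 < p) {c : ℤ} (hc₀ : -m ≤ c)
    (hc₁ : c ≤ 0) :
    2 * (#{u ∈ trapRegion (p + 2 * m) p | u.1 < c} : ℤ) = (c + m) * (c + m + 3) := by
  induction c, hc₀ using Int.leInduction with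
  | base =>
    rw [neg_add_cancel, zero_mul, mul_eq_zero, Nat.cast_eq_zero, card_eq_zero,
      filter_eq_empty_iff]
    refine Or.inr fun u hu => ?_
    have := (mem_trapRegion hp).1 hu
    omega
  | succ c hc ih =>
    rw [card_filter_lt_add_one, Nat.cast_add, mul_add, ih (by omega),
      card_filter_fst_eq_trapRegion hp hc (by omega), max_eq_right (by omega),
      max_eq_left (by omega)]
    ring

theorem two_mul_card_filter_fst_lt_trapRegion_mid (hp : 0 < p) {c : ℤ} (hc₀ : 0 ≤ c)
    (hc₁ : c ≤ p) :
    2 * (#{u ∈ trapRegion (p + 2 * m) p | u.1 < c} : ℤ) = m * (m + 3) + 2 * (m + 2) * c := by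
  induction c, hc₀ using Int.leInduction with
  | base =>
    rw [two_mul_card_filter_fst_lt_trapRegion_left hp (by omega) le_rfl]
    ring
  | succ c hc ih =>
    rw [card_filter_lt_add_one, Nat.cast_add, mul_add, ih (by omega),
      card_filter_fst_eq_trapRegion hp (by omega) (by omega), max_eq_left (by omega)]
    ring

theorem card_filter_le_fst_trapRegion (hp : 0 < p) (c : ℤ) :
    #{u ∈ trapRegion (p + 2 * m) p | c ≤ u.1} =
      #{u ∈ trapRegion (p + 2 * m) p | u.1 < p + 1 - c} := by
  let σ : ℤ × ℤ → ℤ × ℤ := fun u => (p - u.1, u.2)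
  refine card_nbij' σ σ ?_ ?_ (fun u _ => by simp [σ]) (fun u _ => by simp [σ])
  · intro u hu
    simp only [mem_coe, mem_filter, mem_trapRegion hp, σ] at hu ⊢
    omega
  · intro u hu
    simp only [mem_coe, mem_filter, mem_trapRegion hp, σ] at hu ⊢
    omega

theorem two_mul_card_filter_fst_lt_trapRegion_right (hp : 0 < p) {c : ℤ} (hc₀ : p < c)
    (hc₁ : c ≤ p + m + 1) :
    2 * (#{u ∈ trapRegion (p + 2 * m) p | u.1 < c} : ℤ) =
      2 * #(trapRegion (p + 2 * m) p) - (p + m + 1 - c) * (p + m + 4 - c) := by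
  have hsplit := card_filter_add_card_filter_not (s := trapRegion (p + 2 * m) p)
    (fun u => u.1 < c)
  simp only [not_lt] at hsplit
  rw [card_filter_le_fst_trapRegion hp] at hsplit
  have hmirror := two_mul_card_filter_fst_lt_trapRegion_left hp (m := m) (c := p + 1 - c)
    (by omega) (by omega)
  rw [← hsplit]
  push_cast
  linear_combination -hmirror

end trapRegion

/-- For `n, p ≥ 1` of the same parity (with `p ≤ n`), the Wiener index of the
trapezium square-cell configuration `T(n,p)` equals the stated quintic formula. -/
theorem wiener_trapezium (n p : ℤ) (hp : 1 ≤ p) (hpn : p ≤ n)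
    (hpar : (n - p) % 2 = 0) :
    (∑ u ∈ trapRegion n p, ∑ v ∈ trapRegion n p,
        ((|u.1 - v.1| + |u.2 - v.2| : ℤ) : ℚ)) / 2 =
      (11 * (n : ℚ) ^ 5 + 220 * (n : ℚ) ^ 4 - 30 * (n : ℚ) ^ 3 * (p : ℚ) ^ 2 +
        1400 * (n : ℚ) ^ 3 +
        (n : ℚ) ^ 2 * (20 * (p : ℚ) ^ 3 - 360 * (p : ℚ) ^ 2 - 20 * (p : ℚ) + 3440) +
        (n : ℚ) * (-5 * (p : ℚ) ^ 4 + 160 * (p : ℚ) ^ 3 - 880 * (p : ℚ) ^ 2 -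
          160 * (p : ℚ) + 3344) +
        4 * (p : ℚ) ^ 5 - 20 * (p : ℚ) ^ 4 + 140 * (p : ℚ) ^ 3 - 400 * (p : ℚ) ^ 2 -
        144 * (p : ℚ) + 960) / 960 := by
  obtain ⟨m, rfl⟩ : ∃ m : ℕ, n = p + 2 * m := ⟨((n - p) / 2).toNat, by omega⟩
  lift p to ℕ using (by omega)
  replace hp : 0 < p := by omega
  have half {s : Finset (ℤ × ℤ)} {q : ℤ} (h : 2 * (#s : ℤ) = q) : (#s : ℚ) = q / 2 := by
    rw [← h]; push_cast; ring
  have hN : (#(trapRegion (p + 2 * m) p) : ℚ) = (m + 2) * (p + 1) + m * (m + 3) := by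
    exact_mod_cast card_trapRegion hp
  simp only [← Int.cast_sum]
  rw [sum_sum_dist_eq_sum_cuts _ (-m) 0 (m + p + m) (m + 1)
    fun u hu => by have := (mem_trapRegion hp).1 hu; push_cast; omega]
  push_cast
  rw [sum_range_add, sum_range_add,
    sum_range_mul_sub_of_quadratic _ (1 / 2 : ℚ) (3 / 2) 0 _ m ?left,
    sum_range_mul_sub_of_quadratic _ (0 : ℚ) (m + 2) (m * (m + 3) / 2) _ p ?mid,
    sum_range_mul_sub_of_quadratic _ (-1 / 2 : ℚ) ((2 * m + 5) / 2)
      (#(trapRegion (p + 2 * m) p) - (m + 1) * (m + 4) / 2) _ m ?right,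
    sum_range_mul_sub_of_quadratic _ (1 : ℚ) p 0 _ (m + 1) ?rows, hN]
  · push_cast
    ring
  case left =>
    intro k hk
    rw [half (two_mul_card_filter_fst_lt_trapRegion_left hp (c := -m + (k + 1)) (by omega)
      (by omega))]
    push_cast
    ring
  case mid =>
    intro k hk
    rw [half (two_mul_card_filter_fst_lt_trapRegion_mid hp (c := -m + ((m + k : ℕ) + 1))
      (by omega) (by omega))]
    push_cast
    ring
  case right =>
    intro k hk
    rw [half (two_mul_card_filter_fst_lt_trapRegion_right hp
      (c := -m + ((m + p + k : ℕ) + 1)) (by omega) (by omega))]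
    push_cast
    ring
  case rows =>
    intro k hk
    rw [← Int.cast_natCast, card_filter_snd_lt_trapRegion hp (c := 0 + (k + 1)) (by omega)
      (by omega)]
    push_cast
    ring
end
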